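/- For positive semidefinite n×n matrices A and B, ‖A^{1/2} − B^{1/2}‖₂² ≤ ‖A − B‖₁, where ‖·‖₂ is the Hilbert–Schmidt (Frobenius) norm and ‖·‖₁ is the trace norm. (Powers–Størmer inequality) -/

import Mathlib

/-!
Put `X = √A - √B` and `Y = √A + √B`, so that `XY + YX = 2(A - B)` and `-Y ≤ X ≤ Y`.
Writing `X = X⁺ - X⁻` and `|X| = X⁺ + X⁻` gives `|X|Y - X² = X⁺(Y - X) + X⁻(Y + X)`, and the
trace of a product of positive semidefinite matrices is nonnegative, so `tr X² ≤ tr |X|Y`.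
With `U = sign X` we have `UX = XU = |X|`, hence `tr |X|Y = tr U(A - B)`; finally
`|C| - UC = (1 - U)C⁺ + (1 + U)C⁻` with `-1 ≤ U ≤ 1` bounds `tr UC` by `tr |C|`.
-/

open Matrix
open scoped ComplexOrder

/-- The positive semidefinite square root of a positive semidefinite matrix
(the definition removed from Mathlib, restored verbatim). -/
noncomputable def Matrix.PosSemidef.sqrt {m : Type*} [Fintype m] [DecidableEq m] {𝕜 : Type*}
    [RCLike 𝕜] {A : Matrix m m 𝕜} (hA : A.PosSemidef) : Matrix m m 𝕜 :=
  hA.1.eigenvectorUnitary.1 * diagonal ((↑) ∘ (√·) ∘ hA.1.eigenvalues) *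
    (star hA.1.eigenvectorUnitary : Matrix m m 𝕜)

/-- `f` applied to a matrix via the spectral decomposition (junk value `0` if
the matrix is not Hermitian). -/
noncomputable def matFun {n : ℕ} (f : ℝ → ℝ) (A : Matrix (Fin n) (Fin n) ℂ) :
    Matrix (Fin n) (Fin n) ℂ :=
  if hA : A.IsHermitian then
    (hA.eigenvectorUnitary : Matrix (Fin n) (Fin n) ℂ) *
      Matrix.diagonal (fun i => (f (hA.eigenvalues i) : ℂ)) *
      (star hA.eigenvectorUnitary : Matrix (Fin n) (Fin n) ℂ)
  else 0

/-- The eigenvalues of a Hermitian matrix, sorted in non-increasing order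
(junk value `0` if the matrix is not Hermitian). -/
noncomputable def eigsDesc {n : ℕ} (A : Matrix (Fin n) (Fin n) ℂ) : Fin n → ℝ :=
  if hA : A.IsHermitian then (fun k => hA.eigenvalues (Tuple.sort hA.eigenvalues (Fin.rev k)))
  else 0

/-- The absolute value `|X| = (XᴴX)^{1/2}` of a matrix. -/
noncomputable def matAbs {n : ℕ} (X : Matrix (Fin n) (Fin n) ℂ) : Matrix (Fin n) (Fin n) ℂ :=
  (Matrix.posSemidef_conjTranspose_mul_self X).sqrt

/-- The singular values of `X`, sorted in non-increasing order. -/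
noncomputable def svalsDesc {n : ℕ} (X : Matrix (Fin n) (Fin n) ℂ) : Fin n → ℝ :=
  eigsDesc (matAbs X)

/-- Sum of the first `k` entries of a vector indexed by `Fin n`. -/
noncomputable def kSum {n : ℕ} (μ : Fin n → ℝ) (k : ℕ) : ℝ :=
  ∑ j ∈ Finset.univ.filter (fun j : Fin n => (j : ℕ) < k), μ j

/-- The operator norm: the largest singular value. -/
noncomputable def opNorm {n : ℕ} (X : Matrix (Fin n) (Fin n) ℂ) : ℝ :=
  ⨆ i, svalsDesc X i

open scoped MatrixOrder

namespace Matrix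

variable {n 𝕜 : Type*} [Fintype n] [DecidableEq n] [RCLike 𝕜]

lemma PosSemidef.sqrt_eq_cfcSqrt {A : Matrix n n 𝕜} (hA : A.PosSemidef) :
    hA.sqrt = CFC.sqrt A := by
  rw [CFC.sqrt_eq_cfc, cfc_nnreal_eq_real _ A, hA.1.cfc_eq]
  simp only [IsHermitian.cfc, Unitary.conjStarAlgAut_apply, PosSemidef.sqrt]
  congr 3
  funext i
  simp [Real.coe_sqrt, Real.coe_toNNReal', max_eq_left (hA.eigenvalues_nonneg i)]

lemma trace_mul_nonneg {P Q : Matrix n n 𝕜} (hP : 0 ≤ P) (hQ : 0 ≤ Q) : 0 ≤ (P * Q).trace := by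
  have hS : (CFC.sqrt P)ᴴ = CFC.sqrt P := (CFC.sqrt_nonneg (A := Matrix n n 𝕜) P).isSelfAdjoint
  have hPQ : P * Q = CFC.sqrt P * (CFC.sqrt P * Q) := by
    rw [← mul_assoc, CFC.sqrt_mul_sqrt_self P hP]
  rw [hPQ, trace_mul_comm]
  nth_rewrite 1 [← hS]
  exact (hQ.posSemidef.conjTranspose_mul_mul_same _).trace_nonneg

lemma trace_mul_self_le_trace_abs_mul {X Y : Matrix n n 𝕜} (hX : IsSelfAdjoint X) (hXY : X ≤ Y)
    (hYX : -Y ≤ X) : (X * X).trace ≤ (CFC.abs X * Y).trace := by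
  have key : CFC.abs X * Y - X * X = X⁺ * (Y - X) + X⁻ * (Y + X) := by
    have hX' := CFC.posPart_sub_negPart X
    rw [← CFC.posPart_add_negPart X]
    generalize X⁺ = p, X⁻ = m at hX' ⊢
    subst hX'
    noncomm_ring
  rw [← sub_nonneg, ← trace_sub, key, trace_add]
  exact add_nonneg (trace_mul_nonneg (CFC.posPart_nonneg X) (sub_nonneg.mpr hXY))
    (trace_mul_nonneg (CFC.negPart_nonneg X) (neg_le_iff_add_nonneg'.mp hYX))

lemma trace_mul_le_trace_abs {U C : Matrix n n 𝕜} (hC : IsSelfAdjoint C) (hU₁ : U ≤ 1)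
    (hU₂ : -1 ≤ U) : (U * C).trace ≤ (CFC.abs C).trace := by
  have key : CFC.abs C - U * C = (1 - U) * C⁺ + (1 + U) * C⁻ := by
    have hC' := CFC.posPart_sub_negPart C
    rw [← CFC.posPart_add_negPart C]
    generalize C⁺ = p, C⁻ = m at hC' ⊢
    subst hC'
    noncomm_ring
  rw [← sub_nonneg, ← trace_sub, key, trace_add]
  exact add_nonneg (trace_mul_nonneg (sub_nonneg.mpr hU₁) (CFC.posPart_nonneg C))
    (trace_mul_nonneg (neg_le_iff_add_nonneg'.mp hU₂) (CFC.negPart_nonneg C))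

lemma IsSelfAdjoint.exists_mul_eq_cfcAbs {X : Matrix n n 𝕜} (hX : IsSelfAdjoint X) :
    ∃ U : Matrix n n 𝕜, U ≤ 1 ∧ -1 ≤ U ∧ U * X = CFC.abs X ∧ X * U = CFC.abs X := by
  have hsign : ContinuousOn (fun x : ℝ => (SignType.sign x : ℝ)) (spectrum ℝ X) :=
    X.finite_real_spectrum.continuousOn _
  have hsign_bounds (x : ℝ) : -1 ≤ (SignType.sign x : ℝ) ∧ (SignType.sign x : ℝ) ≤ 1 := by
    rcases lt_trichotomy x 0 with h | h | h <;> simp [h]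
  have hUX : cfc (fun x : ℝ => (SignType.sign x : ℝ)) X * X = CFC.abs X := by
    conv_lhs => rhs; rw [← cfc_id' ℝ X]
    rw [← cfc_mul _ _ X, CFC.abs_eq_cfc_norm X]
    simp only [sign_mul_self, Real.norm_eq_abs]
  have hXU : X * cfc (fun x : ℝ => (SignType.sign x : ℝ)) X = CFC.abs X := by
    conv_lhs => lhs; rw [← cfc_id' ℝ X]
    rw [← cfc_mul _ _ X, CFC.abs_eq_cfc_norm X]
    simp only [self_mul_sign, Real.norm_eq_abs]
  refine ⟨cfc (fun x : ℝ => (SignType.sign x : ℝ)) X, cfc_le_one _ _ fun x _ => (hsign_bounds x).2,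
    ?_, hUX, hXU⟩
  simpa using algebraMap_le_cfc _ (-1) X fun x _ => (hsign_bounds x).1

lemma trace_abs_mul_le_trace_abs {X Y C : Matrix n n 𝕜} (hX : IsSelfAdjoint X)
    (hC : IsSelfAdjoint C) (hXYC : X * Y + Y * X = (2 : 𝕜) • C) :
    (CFC.abs X * Y).trace ≤ (CFC.abs C).trace := by
  obtain ⟨U, hU₁, hU₂, hUX, hXU⟩ := hX.exists_mul_eq_cfcAbs
  have h : 2 * (CFC.abs X * Y).trace = 2 * (U * C).trace :=
    calc 2 * (CFC.abs X * Y).trace = (U * X * Y).trace + (X * U * Y).trace := by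
          rw [hUX, hXU, two_mul]
      _ = (U * (X * Y + Y * X)).trace := by
          rw [mul_add, trace_add, ← mul_assoc, ← mul_assoc U Y X, trace_mul_comm (U * Y) X,
            ← mul_assoc]
      _ = 2 * (U * C).trace := by rw [hXYC, mul_smul_comm, trace_smul, smul_eq_mul]
  rw [mul_left_cancel₀ two_ne_zero h]
  exact trace_mul_le_trace_abs hC hU₁ hU₂

theorem trace_sqrt_sub_sqrt_sq_le_trace_abs_sub {A B : Matrix n n 𝕜} (hA : 0 ≤ A) (hB : 0 ≤ B) :
    ((CFC.sqrt A - CFC.sqrt B)ᴴ * (CFC.sqrt A - CFC.sqrt B)).trace ≤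
      (CFC.abs (A - B)).trace := by
  have ha := CFC.sqrt_nonneg (A := Matrix n n 𝕜) A
  have hb := CFC.sqrt_nonneg (A := Matrix n n 𝕜) B
  have hX : IsSelfAdjoint (CFC.sqrt A - CFC.sqrt B) := ha.isSelfAdjoint.sub hb.isSelfAdjoint
  have hXY : CFC.sqrt A - CFC.sqrt B ≤ CFC.sqrt A + CFC.sqrt B :=
    (sub_le_self _ hb).trans (le_add_of_nonneg_right hb)
  have hYX : -(CFC.sqrt A + CFC.sqrt B) ≤ CFC.sqrt A - CFC.sqrt B := by
    rw [neg_add', sub_le_sub_iff_right]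
    exact (neg_nonpos.mpr ha).trans ha
  have hXYC : (CFC.sqrt A - CFC.sqrt B) * (CFC.sqrt A + CFC.sqrt B) +
      (CFC.sqrt A + CFC.sqrt B) * (CFC.sqrt A - CFC.sqrt B) = (2 : 𝕜) • (A - B) := by
    simp only [sub_mul, add_mul, mul_add, mul_sub, CFC.sqrt_mul_sqrt_self A hA,
      CFC.sqrt_mul_sqrt_self B hB, two_smul]
    abel
  rw [← star_eq_conjTranspose, hX]
  exact (trace_mul_self_le_trace_abs_mul hX hXY hYX).trans
    (trace_abs_mul_le_trace_abs hX (hA.isSelfAdjoint.sub hB.isSelfAdjoint) hXYC)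

lemma IsHermitian.sum_eigsDesc {m : ℕ} {M : Matrix (Fin m) (Fin m) ℂ} (hM : M.IsHermitian) :
    ∑ i, eigsDesc M i = M.trace.re := by
  rw [eigsDesc, dif_pos hM, hM.trace_eq_sum_eigenvalues, Complex.re_sum]
  exact Fintype.sum_bijective _ ((Tuple.sort hM.eigenvalues).bijective.comp Fin.rev_bijective)
    _ _ fun _ => rfl

lemma sum_svalsDesc {m : ℕ} (X : Matrix (Fin m) (Fin m) ℂ) :
    ∑ i, svalsDesc X i = (CFC.abs X).trace.re := by
  have hX : matAbs X = CFC.abs X := by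
    rw [matAbs, PosSemidef.sqrt_eq_cfcSqrt, CFC.abs, star_eq_conjTranspose]
  rw [svalsDesc, hX, IsHermitian.sum_eigsDesc (CFC.abs_nonneg X).isSelfAdjoint]

end Matrix

/-- Powers–Størmer: `‖A^{1/2} − B^{1/2}‖₂² ≤ ‖A − B‖₁` for PSD matrices. -/
theorem powers_stormer {n : ℕ} (A B : Matrix (Fin n) (Fin n) ℂ)
    (hA : A.PosSemidef) (hB : B.PosSemidef) :
    (((hA.sqrt - hB.sqrt)ᴴ * (hA.sqrt - hB.sqrt)).trace).re ≤
      ∑ i, svalsDesc (A - B) i := by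
  rw [hA.sqrt_eq_cfcSqrt, hB.sqrt_eq_cfcSqrt, sum_svalsDesc]
  exact (RCLike.le_iff_re_im.mp (trace_sqrt_sub_sqrt_sq_le_trace_abs_sub hA.nonneg hB.nonneg)).1
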